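/- arXiv:0704.1057 — 2 statements merged into one kernel-verified Lean document; each statement's English description precedes it below -/
import Mathlib

section
/- For all m ∈ ℕ, S_m ⊆ Λ_m: if σ∞(n) = m then n can be written as n = 2^m/3^l − Σ_{k=1}^l 2^{b_k}/3^k with 0 ≤ l ≤ m−3 and 0 ≤ b₁ < ⋯ < b_l ≤ m−4 (and n = 2^m for m ≤ 3). Hence S_m = Λ_m for all m. -/
/-- The Collatz map `T`. -/
def T (n : ℕ) : ℕ := if n % 2 = 1 then (3 * n + 1) / 2 else n / 2

/-- Membership in `Λ_m`: `n = 2^m/3^l − Σ_{k=1}^l 2^{b_k}/3^k` with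
`0 ≤ l ≤ m−3` and `0 ≤ b₁ < ⋯ < b_l ≤ m−4` (truncated subtraction handles `m ≤ 3`,
forcing `l = 0` and `n = 2^m` there). -/
def InLambda (m n : ℕ) : Prop :=
  ∃ (l : ℕ) (b : Fin l → ℕ), l ≤ m - 3 ∧ StrictMono b ∧ (∀ i, b i ≤ m - 4) ∧
    (n : ℚ) = 2 ^ m / 3 ^ l - ∑ i : Fin l, (2 ^ (b i) : ℚ) / 3 ^ (i.val + 1)

/-!
Write `λ_m(b) = 2^m/3^l − Σ_{i<l} 2^{b_i}/3^{i+1}`. Then `λ_{m+1}(b + 1) = 2 λ_m(b)` and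
`λ_{m+1}(0 :: (b + 1)) = (2 λ_m(b) − 1)/3`: these are the two inverse branches of `T`. Since
`3^l λ_m(b)` is an integer, `n = λ_{m+1}(b)` is odd exactly when `b_0 = 0`, so `T n = λ_m(c)` for
the `c` with `b = c + 1` or `b = 0 :: (c + 1)`. The index constraints transfer along both
branches (the odd branch needs `m ≥ 3`, which holds because `T n = 2^m` otherwise), so
`Λ_{m+1} = {n ≠ 1 : T n ∈ Λ_m}`, the same recursion that the sets `S_m` satisfy.
-/

def lambdaVal (m : ℕ) {l : ℕ} (b : Fin l → ℕ) : ℚ :=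
  2 ^ m / 3 ^ l - ∑ i : Fin l, (2 ^ (b i) : ℚ) / 3 ^ (i.val + 1)

def IsLambdaIndex (m : ℕ) {l : ℕ} (b : Fin l → ℕ) : Prop :=
  l ≤ m - 3 ∧ StrictMono b ∧ ∀ i, b i ≤ m - 4

lemma inLambda_iff {m n : ℕ} :
    InLambda m n ↔
      ∃ (l : ℕ) (b : Fin l → ℕ), IsLambdaIndex m b ∧ (n : ℚ) = lambdaVal m b := by
  simp only [InLambda, IsLambdaIndex, lambdaVal, and_assoc]

lemma lambdaVal_zero_length (m : ℕ) (b : Fin 0 → ℕ) : lambdaVal m b = 2 ^ m := by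
  simp [lambdaVal]

lemma lambdaVal_cons (m a : ℕ) {l : ℕ} (b : Fin l → ℕ) :
    lambdaVal m (Fin.cons a b : Fin (l + 1) → ℕ) = (lambdaVal m b - 2 ^ a) / 3 := by
  have hsum : ∑ i : Fin l, (2 ^ b i : ℚ) / 3 ^ (i.val + 1 + 1) =
      (∑ i : Fin l, (2 ^ b i : ℚ) / 3 ^ (i.val + 1)) / 3 := by
    simp only [Finset.sum_div, div_div, ← pow_succ]
  simp only [lambdaVal, Fin.sum_univ_succ, Fin.cons_zero, Fin.cons_succ, Fin.val_zero,
    Fin.val_succ, hsum]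
  ring

lemma lambdaVal_add_one (m : ℕ) {l : ℕ} (b : Fin l → ℕ) :
    lambdaVal (m + 1) (fun i => b i + 1) = 2 * lambdaVal m b := by
  have hsum : ∑ i : Fin l, (2 ^ (b i + 1) : ℚ) / 3 ^ (i.val + 1) =
      2 * ∑ i : Fin l, (2 ^ b i : ℚ) / 3 ^ (i.val + 1) := by
    rw [Finset.mul_sum]
    exact Finset.sum_congr rfl fun i _ => by ring
  rw [lambdaVal, lambdaVal, hsum]
  ring

lemma exists_intCast_eq_pow_mul_lambdaVal (m : ℕ) {l : ℕ} (b : Fin l → ℕ) :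
    ∃ z : ℤ, (z : ℚ) = 3 ^ l * lambdaVal m b := by
  induction l with
  | zero => exact ⟨2 ^ m, by simp [lambdaVal_zero_length]⟩
  | succ l ih =>
    obtain ⟨z, hz⟩ := ih (Fin.tail b)
    refine ⟨z - 3 ^ l * 2 ^ b 0, ?_⟩
    have hcons := lambdaVal_cons m (b 0) (Fin.tail b)
    rw [Fin.cons_self_tail] at hcons
    push_cast
    rw [hcons, hz]
    ring

lemma even_of_intCast_eq_two_mul_lambdaVal {m l : ℕ} {b : Fin l → ℕ} {k : ℤ}
    (h : (k : ℚ) = 2 * lambdaVal m b) : Even k := by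
  obtain ⟨z, hz⟩ := exists_intCast_eq_pow_mul_lambdaVal m b
  have hkz : k * 3 ^ l = 2 * z := by
    have : (k : ℚ) * 3 ^ l = 2 * z := by rw [h, hz]; ring
    exact_mod_cast this
  have hcop : IsCoprime (2 : ℤ) (3 ^ l) := IsCoprime.pow_right ⟨-1, 1, by norm_num⟩
  exact even_iff_two_dvd.mpr (hcop.dvd_of_dvd_mul_right ⟨z, hkz⟩)

lemma two_mul_T_of_even {n : ℕ} (h : Even n) : 2 * T n = n := by
  have := Nat.even_iff.mp h
  unfold T
  split <;> omega

lemma two_mul_T_of_odd {n : ℕ} (h : Odd n) : 2 * T n = 3 * n + 1 := by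
  have := Nat.odd_iff.mp h
  unfold T
  split <;> omega

lemma T_eq_of_eq_two_mul_lambdaVal {m n l : ℕ} {c : Fin l → ℕ}
    (h : (n : ℚ) = 2 * lambdaVal m c) : (T n : ℚ) = lambdaVal m c := by
  have hn : Even n := by
    simpa using even_of_intCast_eq_two_mul_lambdaVal (k := n) (by exact_mod_cast h)
  have hT : (2 * T n : ℚ) = n := by exact_mod_cast two_mul_T_of_even hn
  linarith

lemma T_eq_of_three_mul_add_one_eq {m n l : ℕ} {c : Fin l → ℕ}
    (h : (3 * n + 1 : ℚ) = 2 * lambdaVal m c) : (T n : ℚ) = lambdaVal m c := by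
  have hn : Odd n := by
    have := even_of_intCast_eq_two_mul_lambdaVal (k := 3 * n + 1) (by exact_mod_cast h)
    have := Nat.even_iff.mp (by exact_mod_cast this)
    exact Nat.odd_iff.mpr (by omega)
  have hT : (2 * T n : ℚ) = 3 * n + 1 := by exact_mod_cast two_mul_T_of_odd hn
  linarith

lemma val_le_of_strictMono {l : ℕ} {c : Fin l → ℕ} (hc : StrictMono c) (i : Fin l) :
    (i : ℕ) ≤ c i := by
  obtain ⟨i, hi⟩ := i
  induction i with
  | zero => exact Nat.zero_le _
  | succ k ih =>
    have hlt : c ⟨k, by omega⟩ < c ⟨k + 1, hi⟩ := hc (Fin.mk_lt_mk.mpr k.lt_succ_self)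
    exact Nat.succ_le_of_lt ((ih (by omega)).trans_lt hlt)

lemma strictMono_add_one_iff {l : ℕ} {c : Fin l → ℕ} :
    StrictMono (fun i => c i + 1) ↔ StrictMono c :=
  ⟨fun h _ _ hij => Nat.succ_lt_succ_iff.mp (h hij), fun h _ _ hij => Nat.succ_lt_succ (h hij)⟩

lemma isLambdaIndex_succ_add_one_iff {m l : ℕ} {c : Fin l → ℕ} :
    IsLambdaIndex (m + 1) (fun i => c i + 1) ↔ IsLambdaIndex m c := by
  simp only [IsLambdaIndex, strictMono_add_one_iff]
  refine ⟨fun ⟨hl, hc, hle⟩ => ⟨?_, hc, fun i => by have := hle i; omega⟩,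
    fun ⟨hl, hc, hle⟩ => ⟨by omega, hc, fun i => by have := hle i; have := i.isLt; omega⟩⟩
  rcases l with _ | l
  · exact Nat.zero_le _
  · have := val_le_of_strictMono hc (Fin.last l)
    have := hle (Fin.last l)
    simp only [Fin.val_last] at *
    omega

lemma isLambdaIndex_succ_cons_iff {m l : ℕ} {c : Fin l → ℕ} :
    IsLambdaIndex (m + 1) (Fin.cons 0 (fun i => c i + 1) : Fin (l + 1) → ℕ) ↔
      3 ≤ m ∧ IsLambdaIndex m c := by
  simp only [IsLambdaIndex, Fin.strictMono_cons, strictMono_add_one_iff, Fin.forall_fin_succ,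
    Fin.cons_zero, Fin.cons_succ, Nat.succ_pos, implies_true, true_and]
  constructor
  · rintro ⟨hl, hc, -, hle⟩
    exact ⟨by omega, by omega, hc, fun i => by have := hle i; omega⟩
  · rintro ⟨hm, hl, hc, hle⟩
    exact ⟨by omega, hc, by omega, fun i => by have := hle i; have := i.isLt; omega⟩

lemma inLambda_two_pow (m : ℕ) : InLambda m (2 ^ m) :=
  inLambda_iff.mpr ⟨0, Fin.elim0, ⟨Nat.zero_le _, fun i => i.elim0, fun i => i.elim0⟩,
    by simp [lambdaVal_zero_length]⟩

lemma eq_two_pow_of_inLambda {m n : ℕ} (hm : m ≤ 3) (h : InLambda m n) : n = 2 ^ m := by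
  obtain ⟨l, b, ⟨hl, -, -⟩, hn⟩ := inLambda_iff.mp h
  obtain rfl : l = 0 := by omega
  rw [lambdaVal_zero_length] at hn
  exact_mod_cast hn

lemma inLambda_zero_iff {n : ℕ} : InLambda 0 n ↔ n = 1 :=
  ⟨eq_two_pow_of_inLambda (Nat.zero_le 3), fun h => h ▸ inLambda_two_pow 0⟩

lemma inLambda_two_mul {m t : ℕ} (h : InLambda m t) : InLambda (m + 1) (2 * t) := by
  obtain ⟨l, b, hb, ht⟩ := inLambda_iff.mp h
  refine inLambda_iff.mpr ⟨l, fun i => b i + 1, isLambdaIndex_succ_add_one_iff.mpr hb, ?_⟩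
  push_cast
  rw [lambdaVal_add_one, ht]

lemma inLambda_of_two_mul_eq_three_mul_add_one {m t n : ℕ} (hm : 3 ≤ m) (h : InLambda m t)
    (htn : 2 * t = 3 * n + 1) : InLambda (m + 1) n := by
  obtain ⟨l, b, hb, ht⟩ := inLambda_iff.mp h
  refine inLambda_iff.mpr
    ⟨l + 1, Fin.cons 0 (fun i => b i + 1), isLambdaIndex_succ_cons_iff.mpr ⟨hm, hb⟩, ?_⟩
  have htn' : (2 * t : ℚ) = 3 * n + 1 := by exact_mod_cast htn
  rw [lambdaVal_cons, lambdaVal_add_one, ← ht]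
  linarith

lemma inLambda_T_of_inLambda_succ {m n : ℕ} (h : InLambda (m + 1) n) : InLambda m (T n) := by
  obtain ⟨l, b, hb, hn⟩ := inLambda_iff.mp h
  rcases em (∃ i, b i = 0) with ⟨i₀, hi₀⟩ | hpos
  · obtain ⟨l, rfl⟩ : ∃ l', l = l' + 1 := Nat.exists_eq_succ_of_ne_zero i₀.pos.ne'
    have hb0 : b 0 = 0 := by
      have := hb.2.1.monotone (Fin.zero_le i₀)
      omega
    obtain ⟨c, rfl⟩ : ∃ c : Fin l → ℕ, b = Fin.cons 0 (fun i => c i + 1) :=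
      ⟨fun i => b i.succ - 1, funext <| Fin.cases hb0 fun i => by
        have := hb.2.1 (Fin.succ_pos i)
        simp only [Fin.cons_succ]
        omega⟩
    rw [lambdaVal_cons, lambdaVal_add_one] at hn
    exact inLambda_iff.mpr ⟨l, c, (isLambdaIndex_succ_cons_iff.mp hb).2,
      T_eq_of_three_mul_add_one_eq (by rw [hn]; ring)⟩
  · obtain ⟨c, rfl⟩ : ∃ c : Fin l → ℕ, b = fun i => c i + 1 :=
      ⟨fun i => b i - 1, funext fun i =>
        (Nat.sub_add_cancel (Nat.pos_of_ne_zero fun h0 => hpos ⟨i, h0⟩)).symm⟩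
    rw [lambdaVal_add_one] at hn
    exact inLambda_iff.mpr
      ⟨l, c, isLambdaIndex_succ_add_one_iff.mp hb, T_eq_of_eq_two_mul_lambdaVal hn⟩

lemma inLambda_succ_of_inLambda_T {m n : ℕ} (hn : n ≠ 1) (h : InLambda m (T n)) :
    InLambda (m + 1) n := by
  rcases Nat.even_or_odd n with he | ho
  · rw [← two_mul_T_of_even he]
    exact inLambda_two_mul h
  · refine inLambda_of_two_mul_eq_three_mul_add_one ?_ h (two_mul_T_of_odd ho)
    by_contra! hm
    have hT := eq_two_pow_of_inLambda hm.le h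
    have hTn := two_mul_T_of_odd ho
    interval_cases m <;> omega

def IsTotalStoppingTime (m n : ℕ) : Prop :=
  T^[m] n = 1 ∧ ∀ k < m, T^[k] n ≠ 1

lemma isTotalStoppingTime_zero {n : ℕ} : IsTotalStoppingTime 0 n ↔ n = 1 := by
  simp [IsTotalStoppingTime]

lemma isTotalStoppingTime_succ {m n : ℕ} :
    IsTotalStoppingTime (m + 1) n ↔ n ≠ 1 ∧ IsTotalStoppingTime m (T n) := by
  simp only [IsTotalStoppingTime, Function.iterate_succ_apply]
  constructor
  · rintro ⟨h1, hk⟩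
    refine ⟨hk 0 m.succ_pos, h1, fun k hk' => ?_⟩
    simpa only [Function.iterate_succ_apply] using hk (k + 1) (by omega)
  · rintro ⟨hn, h1, hk⟩
    refine ⟨h1, fun k hk' => ?_⟩
    rcases k with _ | k
    · exact hn
    · simpa only [Function.iterate_succ_apply] using hk k (by omega)

lemma IsTotalStoppingTime.unique {m m' n : ℕ} (h : IsTotalStoppingTime m n)
    (h' : IsTotalStoppingTime m' n) : m = m' := by
  rcases lt_trichotomy m m' with hlt | heq | hgt
  · exact absurd h.1 (h'.2 m hlt)
  · exact heq
  · exact absurd h'.1 (h.2 m' hgt)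

theorem stmt_14 (m n : ℕ) :
    (T^[m] n = 1 ∧ ∀ k : ℕ, k < m → T^[k] n ≠ 1) ↔ InLambda m n := by
  change IsTotalStoppingTime m n ↔ _
  induction m generalizing n with
  | zero => rw [isTotalStoppingTime_zero, inLambda_zero_iff]
  | succ m ih =>
    rw [isTotalStoppingTime_succ, ih]
    refine ⟨fun ⟨hn, h⟩ => inLambda_succ_of_inLambda_T hn h,
      fun h => ⟨?_, inLambda_T_of_inLambda_succ h⟩⟩
    -- `T 1 = 2` and `T 2 = 1`, so `n = 1` would force `m = 1`, but `1 ∉ Λ₂`.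
    rintro rfl
    have h2 : IsTotalStoppingTime m 2 := (ih 2).mpr (inLambda_T_of_inLambda_succ h)
    obtain rfl : m = 1 :=
      h2.unique (isTotalStoppingTime_succ.mpr ⟨by decide, isTotalStoppingTime_zero.mpr rfl⟩)
    exact absurd (eq_two_pow_of_inLambda (by norm_num) h) (by norm_num)
end

section
/- For m odd with m ≥ 5 and 0 ≤ k ≤ (m−4)/6, the number 2^m/9 − 1/3 − 2^{m−4−6k}/9 = (2^m − 3 − 2^{m−4−6k})/9 is an odd natural number with total stopping time exactly m. -/
/-!
Put `b = m - 4 - 6k` (odd and positive) and `c = (2^(4+6k) - 1)/3`, so `c ≡ 2 (mod 3)`.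
Then `2^b c ≡ 1 (mod 3)` and `n = (2^b c - 1)/3` satisfies `9n = 2^m - 3 - 2^b`.
The orbit of `n` is read off backwards: `T n = 2^(b-1) c`, halving `b - 1` times gives `c`,
`T c = 2^(3+6k)`, and `3 + 6k` halvings reach `1`; this takes `b + 4 + 6k = m` steps,
and no value before the last one is `1`.
-/

lemma T_two_mul (x : ℕ) : T (2 * x) = x := by
  simp [T]

lemma T_of_three_mul_add_one_eq (x y : ℕ) (h : 3 * x + 1 = 2 * y) : T x = y := by
  simp only [T, show x % 2 = 1 by omega, if_true]
  omega

/-- `σ∞(x) = N` in the paper's notation. -/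
def HasTotalStoppingTime (x N : ℕ) : Prop :=
  T^[N] x = 1 ∧ ∀ j < N, T^[j] x ≠ 1

namespace HasTotalStoppingTime

lemma of_T {x N : ℕ} (h : HasTotalStoppingTime (T x) N) (hx : x ≠ 1) :
    HasTotalStoppingTime x (N + 1) := by
  refine ⟨h.1, fun j hj => ?_⟩
  cases j with
  | zero => exact hx
  | succ j => exact h.2 j (by omega)

lemma of_three_mul_add_one_eq {x y N : ℕ} (h : HasTotalStoppingTime y N)
    (hxy : 3 * x + 1 = 2 * y) (hx : x ≠ 1) : HasTotalStoppingTime x (N + 1) :=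
  of_T (by rwa [T_of_three_mul_add_one_eq x y hxy]) hx

lemma two_mul {x N : ℕ} (h : HasTotalStoppingTime x N) :
    HasTotalStoppingTime (2 * x) (N + 1) :=
  of_T (by rwa [T_two_mul]) (by omega)

lemma two_pow_mul {x N : ℕ} (h : HasTotalStoppingTime x N) (i : ℕ) :
    HasTotalStoppingTime (2 ^ i * x) (N + i) := by
  induction i with
  | zero => simpa using h
  | succ i ih => simpa only [pow_succ', mul_assoc, ← add_assoc] using ih.two_mul

end HasTotalStoppingTime

lemma hasTotalStoppingTime_two_pow (i : ℕ) : HasTotalStoppingTime (2 ^ i) i := by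
  simpa using (show HasTotalStoppingTime 1 0 by simp [HasTotalStoppingTime]).two_pow_mul i

lemma two_pow_mod_three_of_odd {b : ℕ} (hb : b % 2 = 1) : 2 ^ b % 3 = 2 := by
  rw [← Nat.div_add_mod b 2, hb]
  simp [pow_add, pow_mul, Nat.mul_mod, Nat.pow_mod]

lemma two_pow_four_add_six_mul_mod_nine (k : ℕ) : 2 ^ (4 + 6 * k) % 9 = 7 := by
  simp [pow_add, pow_mul, Nat.mul_mod, Nat.pow_mod]

theorem stmt_18 (m k : ℕ) (hodd : m % 2 = 1) (hm : 5 ≤ m) (hk : k ≤ (m - 4) / 6) :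
    9 ∣ 2 ^ m - 3 - 2 ^ (m - 4 - 6 * k) ∧
    (2 ^ m - 3 - 2 ^ (m - 4 - 6 * k)) / 9 % 2 = 1 ∧
    T^[m] ((2 ^ m - 3 - 2 ^ (m - 4 - 6 * k)) / 9) = 1 ∧
    ∀ j : ℕ, j < m → T^[j] ((2 ^ m - 3 - 2 ^ (m - 4 - 6 * k)) / 9) ≠ 1 := by
  obtain ⟨c, hc, hc3⟩ : ∃ c, 3 * c + 1 = 2 ^ (4 + 6 * k) ∧ c % 3 = 2 :=
    ⟨2 ^ (4 + 6 * k) / 3, by have := two_pow_four_add_six_mul_mod_nine k; omega⟩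
  obtain ⟨b, hb⟩ : ∃ b, m - 4 - 6 * k = b + 1 := ⟨m - 5 - 6 * k, by omega⟩
  have hbc : 2 ^ (b + 1) * c % 3 = 1 := by
    rw [Nat.mul_mod, two_pow_mod_three_of_odd (by omega), hc3]
  obtain ⟨n, hn⟩ : ∃ n, 3 * n + 1 = 2 ^ (b + 1) * c := ⟨2 ^ (b + 1) * c / 3, by omega⟩
  have h9 : 2 ^ m - 3 - 2 ^ (b + 1) = 9 * n := by
    have : 2 ^ m = 3 * (2 ^ (b + 1) * c) + 2 ^ (b + 1) := by
      rw [show m = (b + 1) + (4 + 6 * k) by omega, pow_add, ← hc]; ring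
    omega
  have hc' : 3 * c + 1 = 2 * 2 ^ (3 + 6 * k) := by rw [hc]; ring
  have hn' : 3 * n + 1 = 2 * (2 ^ b * c) := by rw [hn]; ring
  have hcn : c ≤ 2 ^ b * c := Nat.le_mul_of_pos_left c (by positivity)
  have hstop : HasTotalStoppingTime n (3 + 6 * k + 1 + b + 1) :=
    ((hasTotalStoppingTime_two_pow _).of_three_mul_add_one_eq hc' (by omega)).two_pow_mul b
      |>.of_three_mul_add_one_eq hn' (by omega)
  rw [show 3 + 6 * k + 1 + b + 1 = m by omega] at hstop
  rw [hb, h9, Nat.mul_div_cancel_left n (by norm_num)]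
  exact ⟨dvd_mul_right 9 n, by omega, hstop⟩
end
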